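/- (Formal uniformization) With P idempotent linear filtration-preserving on a complete filtered associative algebra A, there exists a unique bijection Ψ: A_{1,+} × A_{1,−} → A_{1,−} × A_{1,+} such that for all (a_+, a_−) ∈ A_{1,+} × A_{1,−}: exp(a_+)exp(a_−) = exp(π_−(Ψ(a_+,a_−))) exp(π_+(Ψ(a_+,a_−))), where π_± are the projections onto A_{1,±}. -/

import Mathlib

open scoped BigOperators

noncomputable def expS (K : Type*) {A : Type*} [Field K] [CharZero K] [Ring A] [Algebra K A]
    [UniformSpace A] (a : A) : A :=
  ∑' n : ℕ, ((n.factorial : K)⁻¹) • a ^ n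

noncomputable def logS (K : Type*) {A : Type*} [Field K] [CharZero K] [Ring A] [Algebra K A]
    [UniformSpace A] (a : A) : A :=
  ∑' n : ℕ, (((-1 : K) ^ n) * ((n : K) + 1)⁻¹) • (a - 1) ^ (n + 1)

noncomputable def BCHs (K : Type*) {A : Type*} [Field K] [CharZero K] [Ring A] [Algebra K A]
    [UniformSpace A] (x y : A) : A :=
  logS K (expS K x * expS K y) - x - y

/-- A complete decreasing multiplicative filtration defining the topology of `A`. -/
def IsCompleteFiltration (K : Type*) {A : Type*} [Field K] [CharZero K] [Ring A] [Algebra K A]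
    [UniformSpace A] (F : ℕ → Submodule K A) : Prop :=
  F 0 = ⊤ ∧ (∀ n, F (n + 1) ≤ F n) ∧
    (∀ m n : ℕ, ∀ x ∈ F m, ∀ y ∈ F n, x * y ∈ F (m + n)) ∧
    (∀ n, IsOpen ((F n : Set A))) ∧
    (∀ U ∈ nhds (0 : A), ∃ n, ((F n : Set A)) ⊆ U)

variable {K : Type*} [Field K] [CharZero K] {A : Type*} [Ring A] [Algebra K A]
  [UniformSpace A] [CompleteSpace A] [T2Space A] [IsTopologicalRing A]
  [IsUniformAddGroup A]

/-!
Successive approximation: for `ξ, η ∈ F (n+1)` one has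
`exp (x + ξ) exp (y + η) ≡ exp x exp y + ξ + η` modulo `F (n+2)`, so an error
`δ ∈ F (n+1)` in `g = exp x exp y` is pushed one step down the filtration by the correction
`(P δ, δ - P δ)`. Completeness makes the approximations converge, and the same estimate gives
uniqueness. Hence `(x, y) ↦ exp x exp y` maps `A_{1,-} × A_{1,+}` bijectively onto `1 + F 1`,
and so it does on `A_{1,+} × A_{1,-}` (replace `P` by `1 - P`); `Ψ` is the second bijection
followed by the inverse of the first.
-/

open Set Function

omit [CompleteSpace A] [T2Space A] [IsTopologicalRing A] [IsUniformAddGroup A] in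
theorem expS_zero : expS K (0 : A) = 1 := by
  rw [expS, tsum_eq_single 0 fun n hn => by simp [zero_pow hn]]
  simp

namespace IsCompleteFiltration

variable {F : ℕ → Submodule K A}

section Algebraic

omit [CompleteSpace A] [T2Space A] [IsTopologicalRing A] [IsUniformAddGroup A]

theorem antitone (hF : IsCompleteFiltration K F) : Antitone F :=
  antitone_nat_of_succ_le hF.2.1

theorem mem_zero (hF : IsCompleteFiltration K F) (x : A) : x ∈ F 0 :=
  hF.1 ▸ Submodule.mem_top

theorem mul_mem (hF : IsCompleteFiltration K F) {m n : ℕ} {x y : A} (hx : x ∈ F m)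
    (hy : y ∈ F n) : x * y ∈ F (m + n) :=
  hF.2.2.1 m n x hx y hy

theorem pow_mem (hF : IsCompleteFiltration K F) {a : A} (ha : a ∈ F 1) (k : ℕ) :
    a ^ k ∈ F k := by
  induction k with
  | zero => exact hF.mem_zero _
  | succ k ih => rw [pow_succ]; exact hF.mul_mem ih ha

theorem pow_succ_sub_pow_succ_mem (hF : IsCompleteFiltration K F) {a b : A} {n : ℕ}
    (ha : a ∈ F 1) (hb : b ∈ F 1) (h : a - b ∈ F n) (k : ℕ) :
    a ^ (k + 1) - b ^ (k + 1) ∈ F (n + k) := by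
  induction k with
  | zero => simpa using h
  | succ k ih =>
    have key : a ^ (k + 2) - b ^ (k + 2)
        = (a ^ (k + 1) - b ^ (k + 1)) * a + b ^ (k + 1) * (a - b) := by
      rw [pow_succ a, pow_succ b]; noncomm_ring
    rw [key]
    exact add_mem (hF.mul_mem ih ha : _ ∈ F (n + k + 1))
      (add_comm (k + 1) n ▸ hF.mul_mem (hF.pow_mem hb _) h)

end Algebraic

omit [IsTopologicalRing A]

omit [CompleteSpace A] [T2Space A] in
theorem isClosed (hF : IsCompleteFiltration K F) (n : ℕ) : IsClosed (F n : Set A) :=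
  (F n).toAddSubgroup.isClosed_of_isOpen (hF.2.2.2.1 n)

omit [CompleteSpace A] [IsUniformAddGroup A] in
theorem eq_zero_of_forall_mem (hF : IsCompleteFiltration K F) {x : A} (h : ∀ n, x ∈ F n) :
    x = 0 := by
  by_contra hx
  obtain ⟨n, hn⟩ := hF.2.2.2.2 {x}ᶜ (isOpen_compl_singleton.mem_nhds (Ne.symm hx))
  exact hn (h n) rfl

omit [T2Space A] in
theorem summable_of_mem (hF : IsCompleteFiltration K F) {f : ℕ → A} (h : ∀ k, f k ∈ F k) :
    Summable f := by
  rw [summable_iff_vanishing]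
  intro U hU
  obtain ⟨N, hN⟩ := hF.2.2.2.2 U hU
  refine ⟨Finset.range N, fun t ht => hN (Submodule.sum_mem _ fun i hi => hF.antitone ?_ (h i))⟩
  simpa using Finset.disjoint_left.mp ht hi

theorem exists_sub_mem_of_succ_sub_mem (hF : IsCompleteFiltration K F) {u : ℕ → A}
    (h : ∀ m, u (m + 1) - u m ∈ F (m + 1)) : ∃ l, ∀ m, l - u m ∈ F (m + 1) := by
  have hd : Summable fun m => u (m + 1) - u m :=
    hF.summable_of_mem fun m => hF.antitone m.le_succ (h m)
  refine ⟨u 0 + ∑' k, (u (k + 1) - u k), fun m => ?_⟩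
  have htail : u 0 + ∑' k, (u (k + 1) - u k) - u m = ∑' k, (u (k + m + 1) - u (k + m)) := by
    rw [← hd.sum_add_tsum_nat_add m, Finset.sum_range_sub]; abel
  rw [htail]
  exact tsum_mem (hF.isClosed _) fun k => hF.antitone (by omega) (h (k + m))


theorem expS_eq (hF : IsCompleteFiltration K F) {a : A} (ha : a ∈ F 1) :
    expS K a = 1 + a + ∑' k, ((k + 2).factorial : K)⁻¹ • a ^ (k + 2) := by
  have hs : Summable fun k => (k.factorial : K)⁻¹ • a ^ k :=
    hF.summable_of_mem fun k => Submodule.smul_mem _ _ (hF.pow_mem ha k)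
  rw [expS, ← hs.sum_add_tsum_nat_add 2]
  simp [Finset.sum_range_succ]

omit [CompleteSpace A] [T2Space A] in
theorem tsum_smul_pow_mem (hF : IsCompleteFiltration K F) {a : A} (ha : a ∈ F 1) (c : ℕ → K) :
    ∑' k, c k • a ^ (k + 2) ∈ F 2 :=
  tsum_mem (hF.isClosed 2) fun k =>
    hF.antitone (by omega) (Submodule.smul_mem _ _ (hF.pow_mem ha _))

theorem expS_sub_one_mem (hF : IsCompleteFiltration K F) {a : A} (ha : a ∈ F 1) :
    expS K a - 1 ∈ F 1 := by
  rw [hF.expS_eq ha, add_assoc, add_sub_cancel_left]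
  exact add_mem ha (hF.antitone one_le_two (hF.tsum_smul_pow_mem ha _))

theorem expS_sub_expS_sub_mem (hF : IsCompleteFiltration K F) {a b : A} {n : ℕ}
    (ha : a ∈ F 1) (hb : b ∈ F 1) (h : a - b ∈ F n) :
    expS K a - expS K b - (a - b) ∈ F (n + 1) := by
  have hs : ∀ {x : A}, x ∈ F 1 → Summable fun k => ((k + 2).factorial : K)⁻¹ • x ^ (k + 2) :=
    fun hx => hF.summable_of_mem fun k => hF.antitone (by omega)
      (Submodule.smul_mem _ _ (hF.pow_mem hx _))
  rw [hF.expS_eq ha, hF.expS_eq hb,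
    show ∀ x y z w : A, 1 + x + z - (1 + y + w) - (x - y) = z - w from fun _ _ _ _ => by abel,
    ← (hs ha).tsum_sub (hs hb)]
  refine tsum_mem (hF.isClosed _) fun k => ?_
  rw [← smul_sub]
  exact Submodule.smul_mem _ _
    (hF.antitone (by omega) (hF.pow_succ_sub_pow_succ_mem ha hb h (k + 1)))

theorem expS_mul_expS_sub_sub_mem (hF : IsCompleteFiltration K F) {a a' b b' : A} {n : ℕ}
    (ha : a ∈ F 1) (ha' : a' ∈ F 1) (hb : b ∈ F 1) (hb' : b' ∈ F 1)
    (hξ : a - a' ∈ F n) (hη : b - b' ∈ F n) :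
    expS K a * expS K b - expS K a' * expS K b' - (a - a') - (b - b') ∈ F (n + 1) := by
  have key : expS K a * expS K b - expS K a' * expS K b' - (a - a') - (b - b')
      = (a - a') * (expS K b - 1) + (expS K a - expS K a' - (a - a')) * expS K b
        + (expS K a' - 1) * (b - b') + expS K a' * (expS K b - expS K b' - (b - b')) := by
    noncomm_ring
  rw [key]
  refine add_mem (add_mem (add_mem ?_ ?_) ?_) ?_
  · exact hF.mul_mem hξ (hF.expS_sub_one_mem hb)
  · exact (hF.mul_mem (hF.expS_sub_expS_sub_mem ha ha' hξ) (hF.mem_zero _) : _ ∈ F (n + 1 + 0))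
  · exact add_comm 1 n ▸ hF.mul_mem (hF.expS_sub_one_mem ha') hη
  · exact zero_add (n + 1) ▸ hF.mul_mem (hF.mem_zero _) (hF.expS_sub_expS_sub_mem hb hb' hη)

theorem expS_mul_expS_sub_mem (hF : IsCompleteFiltration K F) {a a' b b' : A} {n : ℕ}
    (ha : a ∈ F 1) (ha' : a' ∈ F 1) (hb : b ∈ F 1) (hb' : b' ∈ F 1)
    (hξ : a - a' ∈ F n) (hη : b - b' ∈ F n) :
    expS K a * expS K b - expS K a' * expS K b' ∈ F n := by
  have h := hF.antitone n.le_succ (hF.expS_mul_expS_sub_sub_mem ha ha' hb hb' hξ hη)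
  convert add_mem (add_mem h hξ) hη using 1
  abel

theorem expS_mul_expS_sub_one_mem (hF : IsCompleteFiltration K F) {a b : A} (ha : a ∈ F 1)
    (hb : b ∈ F 1) : expS K a * expS K b - 1 ∈ F 1 := by
  have h := hF.expS_mul_expS_sub_mem ha (zero_mem _) hb (zero_mem _)
    (by simpa using ha) (by simpa using hb)
  rwa [expS_zero, one_mul] at h

end IsCompleteFiltration

section Projection

variable (F : ℕ → Submodule K A)

omit [CharZero K] [UniformSpace A] [CompleteSpace A] [T2Space A] [IsTopologicalRing A]
  [IsUniformAddGroup A]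

/-- `A_{1,-} = P (A_1)` of the paper, see `image_eq_minusPart`. -/
def minusPart (P : A →ₗ[K] A) : Set A := {x | x ∈ F 1 ∧ P x = x}

/-- `A_{1,+} = (1 - P) (A_1)` of the paper, see `image_sub_eq_plusPart`. -/
def plusPart (P : A →ₗ[K] A) : Set A := {x | x ∈ F 1 ∧ P x = 0}

variable {F}

theorem image_eq_minusPart {P : A →ₗ[K] A} (hP : ∀ x ∈ F 1, P x ∈ F 1)
    (hPP : ∀ x, P (P x) = P x) : P '' (F 1 : Set A) = minusPart F P := by
  ext x
  constructor
  · rintro ⟨y, hy, rfl⟩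
    exact ⟨hP y hy, hPP y⟩
  · rintro ⟨hx, hPx⟩
    exact ⟨x, hx, hPx⟩

theorem image_sub_eq_plusPart {P : A →ₗ[K] A} (hP : ∀ x ∈ F 1, P x ∈ F 1)
    (hPP : ∀ x, P (P x) = P x) : (fun x => x - P x) '' (F 1 : Set A) = plusPart F P := by
  ext x
  constructor
  · rintro ⟨y, hy, rfl⟩
    exact ⟨sub_mem hy (hP y hy), by rw [map_sub, hPP, sub_self]⟩
  · rintro ⟨hx, hPx⟩
    exact ⟨x, hx, by simp [hPx]⟩

theorem minusPart_id_sub (P : A →ₗ[K] A) : minusPart F (LinearMap.id - P) = plusPart F P := by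
  ext x
  simp [minusPart, plusPart]

theorem plusPart_id_sub (P : A →ₗ[K] A) : plusPart F (LinearMap.id - P) = minusPart F P := by
  ext x
  simp [minusPart, plusPart, sub_eq_zero, eq_comm (a := x)]

end Projection

section Factorization

variable {F : ℕ → Submodule K A} {P : A →ₗ[K] A}

omit [IsTopologicalRing A]

variable (K) in
noncomputable def expProd (p : A × A) : A := expS K p.1 * expS K p.2

theorem expProd_mapsTo (hF : IsCompleteFiltration K F) :
    MapsTo (expProd K) (minusPart F P ×ˢ plusPart F P) {g | g - 1 ∈ F 1} :=
  fun _ ⟨⟨ha, _⟩, hb, _⟩ => hF.expS_mul_expS_sub_one_mem ha hb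

theorem expProd_injOn (hF : IsCompleteFiltration K F) (hP : ∀ n, ∀ x ∈ F n, P x ∈ F n) :
    InjOn (expProd K) (minusPart F P ×ˢ plusPart F P) := by
  rintro ⟨a, b⟩ ⟨⟨ha, hPa⟩, hb, hPb⟩ ⟨a', b'⟩ ⟨⟨ha', hPa'⟩, hb', hPb'⟩ heq
  have hdiff : ∀ n, a - a' ∈ F n ∧ b - b' ∈ F n := by
    intro n
    induction n with
    | zero => exact ⟨hF.mem_zero _, hF.mem_zero _⟩
    | succ n ih =>
      have hsum : (a - a') + (b - b') ∈ F (n + 1) := by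
        have h := hF.expS_mul_expS_sub_sub_mem ha ha' hb hb' ih.1 ih.2
        rw [show expS K a * expS K b = expS K a' * expS K b' from heq] at h
        convert neg_mem h using 1
        abel
      -- `P` kills `b - b'` and fixes `a - a'`
      have hξ : a - a' ∈ F (n + 1) := by
        simpa [hPa, hPa', hPb, hPb'] using hP _ _ hsum
      exact ⟨hξ, by simpa using sub_mem hsum hξ⟩
  exact Prod.ext (sub_eq_zero.mp (hF.eq_zero_of_forall_mem fun n => (hdiff n).1))
    (sub_eq_zero.mp (hF.eq_zero_of_forall_mem fun n => (hdiff n).2))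

omit [CompleteSpace A] [IsUniformAddGroup A] in
theorem mem_minusPart_of_forall_sub_mem (hF : IsCompleteFiltration K F)
    (hP : ∀ n, ∀ x ∈ F n, P x ∈ F n) {u : ℕ → A} (hu : ∀ n, u n ∈ minusPart F P) {x : A}
    (hx : ∀ n, x - u n ∈ F (n + 1)) : x ∈ minusPart F P := by
  refine ⟨by simpa using add_mem (hx 0) (hu 0).1, eq_of_sub_eq_zero
    (hF.eq_zero_of_forall_mem fun n => ?_)⟩
  have h : P x - x = P (x - u n) - (x - u n) := by rw [map_sub, (hu n).2]; abel
  rw [h]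
  exact hF.antitone n.le_succ (sub_mem (hP _ _ (hx n)) (hx n))

omit [CompleteSpace A] [IsUniformAddGroup A] in
theorem mem_plusPart_of_forall_sub_mem (hF : IsCompleteFiltration K F)
    (hP : ∀ n, ∀ x ∈ F n, P x ∈ F n) {u : ℕ → A} (hu : ∀ n, u n ∈ plusPart F P) {x : A}
    (hx : ∀ n, x - u n ∈ F (n + 1)) : x ∈ plusPart F P := by
  refine ⟨by simpa using add_mem (hx 0) (hu 0).1, hF.eq_zero_of_forall_mem fun n => ?_⟩
  rw [show P x = P (x - u n) by rw [map_sub, (hu n).2, sub_zero]]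
  exact hF.antitone n.le_succ (hP _ _ (hx n))

variable (K P) in
noncomputable def factorStep (g : A) (q : A × A) : A × A :=
  (q.1 + P (g - expProd K q), q.2 + (g - expProd K q - P (g - expProd K q)))

theorem factorStep_mem (hF : IsCompleteFiltration K F) (hP : ∀ n, ∀ x ∈ F n, P x ∈ F n)
    (hPP : ∀ x, P (P x) = P x) {g : A} {q : A × A} {n : ℕ}
    (hq : q ∈ minusPart F P ×ˢ plusPart F P) (hg : g - expProd K q ∈ F (n + 1)) :
    factorStep K P g q ∈ minusPart F P ×ˢ plusPart F P ∧
      g - expProd K (factorStep K P g q) ∈ F (n + 2) := by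
  obtain ⟨⟨ha, hPa⟩, hb, hPb⟩ := hq
  set δ := g - expProd K q
  have hξ : P δ ∈ F (n + 1) := hP _ _ hg
  have hη : δ - P δ ∈ F (n + 1) := sub_mem hg hξ
  have hle : F (n + 1) ≤ F 1 := hF.antitone (by omega)
  have ha' : q.1 + P δ ∈ F 1 := add_mem ha (hle hξ)
  have hb' : q.2 + (δ - P δ) ∈ F 1 := add_mem hb (hle hη)
  rw [show factorStep K P g q = (q.1 + P δ, q.2 + (δ - P δ)) from rfl]
  refine ⟨⟨⟨ha', by rw [map_add, hPa, hPP]⟩, hb',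
    by rw [map_add, hPb, map_sub, hPP, sub_self, add_zero]⟩, ?_⟩
  have h := hF.expS_mul_expS_sub_sub_mem ha' ha hb' hb (by simpa using hξ) (by simpa using hη)
  rw [add_sub_cancel_left, add_sub_cancel_left] at h
  have e : g - expProd K (q.1 + P δ, q.2 + (δ - P δ)) = -(expS K (q.1 + P δ)
      * expS K (q.2 + (δ - P δ)) - expS K q.1 * expS K q.2 - P δ - (δ - P δ)) := by
    rw [expProd, show δ = g - expS K q.1 * expS K q.2 from rfl]
    abel
  rw [e]
  exact neg_mem h

theorem expProd_surjOn (hF : IsCompleteFiltration K F) (hP : ∀ n, ∀ x ∈ F n, P x ∈ F n)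
    (hPP : ∀ x, P (P x) = P x) :
    SurjOn (expProd K) (minusPart F P ×ˢ plusPart F P) {g | g - 1 ∈ F 1} := by
  intro g hg
  set s : ℕ → A × A := fun n => (factorStep K P g)^[n] 0
  have hs_succ : ∀ n, s (n + 1) = factorStep K P g (s n) :=
    fun n => iterate_succ_apply' _ n 0
  have hs : ∀ n, s n ∈ minusPart F P ×ˢ plusPart F P ∧ g - expProd K (s n) ∈ F (n + 1) := by
    intro n
    induction n with
    | zero => exact ⟨⟨⟨zero_mem _, map_zero P⟩, zero_mem _, map_zero P⟩,
        by simpa [s, expProd, expS_zero] using hg⟩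
    | succ n ih => exact hs_succ n ▸ factorStep_mem hF hP hPP ih.1 ih.2
  obtain ⟨x, hx⟩ := hF.exists_sub_mem_of_succ_sub_mem (u := fun n => (s n).1)
    fun n => by simpa [hs_succ, factorStep] using hP _ _ (hs n).2
  obtain ⟨y, hy⟩ := hF.exists_sub_mem_of_succ_sub_mem (u := fun n => (s n).2)
    fun n => by simpa [hs_succ, factorStep] using sub_mem (hs n).2 (hP _ _ (hs n).2)
  have hxm := mem_minusPart_of_forall_sub_mem hF hP (fun n => (hs n).1.1) hx
  have hym := mem_plusPart_of_forall_sub_mem hF hP (fun n => (hs n).1.2) hy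
  refine ⟨(x, y), ⟨hxm, hym⟩, (sub_eq_zero.mp (hF.eq_zero_of_forall_mem fun n => ?_)).symm⟩
  have h := hF.expS_mul_expS_sub_mem (hs n).1.1.1 hxm.1 (hs n).1.2.1 hym.1
    (by simpa using neg_mem (hx n)) (by simpa using neg_mem (hy n))
  rw [← sub_add_sub_cancel g (expProd K (s n))]
  exact hF.antitone n.le_succ (add_mem (hs n).2 h)

theorem bijOn_expProd (hF : IsCompleteFiltration K F) (hP : ∀ n, ∀ x ∈ F n, P x ∈ F n)
    (hPP : ∀ x, P (P x) = P x) :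
    BijOn (expProd K) (minusPart F P ×ˢ plusPart F P) {g | g - 1 ∈ F 1} :=
  ⟨expProd_mapsTo hF, expProd_injOn hF hP, expProd_surjOn hF hP hPP⟩

end Factorization

theorem stmt7 (F : ℕ → Submodule K A) (hF : IsCompleteFiltration K F)
    (P : A →ₗ[K] A) (hP : ∀ n, ∀ x ∈ F n, P x ∈ F n)
    (hPP : ∀ x : A, P (P x) = P x) :
    ∃ Ψ : A × A → A × A,
      (Set.BijOn Ψ (((fun x => x - P x) '' (F 1 : Set A)) ×ˢ (⇑P '' (F 1 : Set A)))
          ((⇑P '' (F 1 : Set A)) ×ˢ ((fun x => x - P x) '' (F 1 : Set A))) ∧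
        ∀ p ∈ ((fun x => x - P x) '' (F 1 : Set A)) ×ˢ (⇑P '' (F 1 : Set A)),
          expS K p.1 * expS K p.2 = expS K (Ψ p).1 * expS K (Ψ p).2) ∧
      ∀ Ψ' : A × A → A × A,
        (Set.BijOn Ψ' (((fun x => x - P x) '' (F 1 : Set A)) ×ˢ (⇑P '' (F 1 : Set A)))
            ((⇑P '' (F 1 : Set A)) ×ˢ ((fun x => x - P x) '' (F 1 : Set A))) ∧
          ∀ p ∈ ((fun x => x - P x) '' (F 1 : Set A)) ×ˢ (⇑P '' (F 1 : Set A)),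
            expS K p.1 * expS K p.2 = expS K (Ψ' p).1 * expS K (Ψ' p).2) →
        Set.EqOn Ψ' Ψ (((fun x => x - P x) '' (F 1 : Set A)) ×ˢ (⇑P '' (F 1 : Set A))) := by
  have hQ : ∀ n, ∀ x ∈ F n, (LinearMap.id - P : A →ₗ[K] A) x ∈ F n :=
    fun n x hx => sub_mem hx (hP n x hx)
  have hQQ : ∀ x, (LinearMap.id - P : A →ₗ[K] A) ((LinearMap.id - P : A →ₗ[K] A) x)
      = (LinearMap.id - P : A →ₗ[K] A) x := by
    simp [hPP]
  rw [image_eq_minusPart (hP 1) hPP, image_sub_eq_plusPart (hP 1) hPP]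
  have hbij := bijOn_expProd hF hP hPP
  have hbij' : BijOn (expProd K) (plusPart F P ×ˢ minusPart F P) {g | g - 1 ∈ F 1} := by
    simpa only [minusPart_id_sub, plusPart_id_sub] using bijOn_expProd hF hQ hQQ
  have hinv := hbij.invOn_invFunOn
  have hΨ := (hbij.symm hinv.symm).comp hbij'
  refine ⟨invFunOn (expProd K) (minusPart F P ×ˢ plusPart F P) ∘ expProd K,
    ⟨hΨ, fun p hp => (hinv.2 (hbij'.mapsTo hp)).symm⟩, ?_⟩
  rintro Ψ' ⟨hΨ', hexp⟩ p hp
  exact hbij.injOn (hΨ'.mapsTo hp) (hΨ.mapsTo hp)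
    ((hexp p hp).symm.trans (hinv.2 (hbij'.mapsTo hp)).symm)
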